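/- Let A be the 2×2 matrix with rows (δ', −β') and (−γ', α'), where α,β,γ,δ are smooth functions of (x,y,z,t,λ) with det A = α'δ' − β'γ' ≠ 0. Define X = ∂_x − α∂_z − β∂_t, Y = ∂_y − γ∂_z − δ∂_t on ℝ⁵ (coordinates x,y,z,t,λ), and set (m,n)ᵀ = A⁻¹ (αδ_z + βδ_t − γβ_z − δβ_t + β_y − δ_x, γα_z + δα_t − αγ_z − βγ_t + γ_x − α_y)ᵀ. Then the lifts X̂ = X + m∂_λ, Ŷ = Y + n∂_λ satisfy dz([X̂,Ŷ]) = 0 and dt([X̂,Ŷ]) = 0, and moreover dx([X̂,Ŷ]) = 0 and dy([X̂,Ŷ]) = 0 automatically; i.e., [X̂,Ŷ] is proportional to ∂_λ (normality). Furthermore (m,n) is the unique pair of functions with this property. -/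

import Mathlib

/-- Partial derivative in the `i`-th coordinate direction on `ℝ⁵` (coordinates
`(x,y,z,t,λ)`, indices `0,1,2,3,4`). -/
noncomputable def pd (i : Fin 5) (f : (Fin 5 → ℝ) → ℝ) (p : Fin 5 → ℝ) : ℝ :=
  fderiv ℝ f p (Pi.single i 1)

/-- Lie bracket of vector fields on `ℝ⁵`. -/
noncomputable def lie (X Y : (Fin 5 → ℝ) → (Fin 5 → ℝ)) (p : Fin 5 → ℝ) : Fin 5 → ℝ :=
  fderiv ℝ Y p (X p) - fderiv ℝ X p (Y p)


lemma pd_contDiff {f : (Fin 5 → ℝ) → ℝ} (hf : ContDiff ℝ (⊤ : ℕ∞) f) (i : Fin 5) :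
    ContDiff ℝ (⊤ : ℕ∞) (pd i f) :=
  (hf.fderiv_right (m := (⊤ : ℕ∞)) (by simp)).clm_apply contDiff_const

lemma fderiv_apply_eq_sum {f : (Fin 5 → ℝ) → ℝ} {p : Fin 5 → ℝ}
    (_hf : DifferentiableAt ℝ f p) (v : Fin 5 → ℝ) :
    fderiv ℝ f p v = ∑ i, v i * pd i f p := by
  have hv : v = ∑ i : Fin 5, v i • (Pi.single i 1 : Fin 5 → ℝ) := by
    funext j
    simp [Finset.sum_apply, Pi.single_apply]
  conv_lhs => rw [hv]
  rw [map_sum]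
  simp [pd, smul_eq_mul]

lemma lie_apply (X Y : (Fin 5 → ℝ) → Fin 5 → ℝ) (p : Fin 5 → ℝ) (i : Fin 5)
    (hX : ∀ j, DifferentiableAt ℝ (fun q => X q j) p)
    (hY : ∀ j, DifferentiableAt ℝ (fun q => Y q j) p) :
    lie X Y p i =
      fderiv ℝ (fun q => Y q i) p (X p) - fderiv ℝ (fun q => X q i) p (Y p) := by
  unfold lie
  rw [fderiv_pi hY, fderiv_pi hX]
  simp

lemma field_comp_diff (c₀ c₁ : ℝ) (f g h : (Fin 5 → ℝ) → ℝ)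
    (hf : Differentiable ℝ f) (hg : Differentiable ℝ g) (hh : Differentiable ℝ h)
    (p : Fin 5 → ℝ) (j : Fin 5) :
    DifferentiableAt ℝ (fun q => ![c₀, c₁, -f q, -g q, h q] j) p := by
  fin_cases j <;> simp <;> fun_prop

lemma lie_comp (α β γ δ M N : (Fin 5 → ℝ) → ℝ)
    (hα : Differentiable ℝ α) (hβ : Differentiable ℝ β) (hγ : Differentiable ℝ γ)
    (hδ : Differentiable ℝ δ) (hM : Differentiable ℝ M) (hN : Differentiable ℝ N)
    (p : Fin 5 → ℝ) :
    lie (fun q => ![1,0,-α q,-β q,M q]) (fun q => ![0,1,-γ q,-δ q,N q]) p 0 = 0 ∧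
    lie (fun q => ![1,0,-α q,-β q,M q]) (fun q => ![0,1,-γ q,-δ q,N q]) p 1 = 0 ∧
    lie (fun q => ![1,0,-α q,-β q,M q]) (fun q => ![0,1,-γ q,-δ q,N q]) p 2 =
      (pd 1 α p - γ p * pd 2 α p - δ p * pd 3 α p + N p * pd 4 α p)
        - (pd 0 γ p - α p * pd 2 γ p - β p * pd 3 γ p + M p * pd 4 γ p) ∧
    lie (fun q => ![1,0,-α q,-β q,M q]) (fun q => ![0,1,-γ q,-δ q,N q]) p 3 =
      (pd 1 β p - γ p * pd 2 β p - δ p * pd 3 β p + N p * pd 4 β p)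
        - (pd 0 δ p - α p * pd 2 δ p - β p * pd 3 δ p + M p * pd 4 δ p) := by
  have hXd : ∀ j, DifferentiableAt ℝ (fun q => ![1,0,-α q,-β q,M q] j) p :=
    field_comp_diff 1 0 α β M hα hβ hM p
  have hYd : ∀ j, DifferentiableAt ℝ (fun q => ![0,1,-γ q,-δ q,N q] j) p :=
    field_comp_diff 0 1 γ δ N hγ hδ hN p
  have key : ∀ (f : (Fin 5 → ℝ) → ℝ), Differentiable ℝ f → ∀ v : Fin 5 → ℝ,
      fderiv ℝ (fun q => -f q) p v = -(∑ i, v i * pd i f p) := by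
    intro f hf v
    rw [fderiv_fun_neg, ContinuousLinearMap.neg_apply, fderiv_apply_eq_sum (hf p)]
  refine ⟨?_, ?_, ?_, ?_⟩ <;> rw [lie_apply _ _ _ _ hXd hYd]
  · have e1 : (fun q => ![(0:ℝ),1,-γ q,-δ q,N q] 0) = fun _ => (0:ℝ) := by
      funext q; simp
    have e2 : (fun q => ![(1:ℝ),0,-α q,-β q,M q] 0) = fun _ => (1:ℝ) := by
      funext q; simp
    rw [e1, e2, fderiv_fun_const, fderiv_fun_const]
    simp
  · have e1 : (fun q => ![(0:ℝ),1,-γ q,-δ q,N q] 1) = fun _ => (1:ℝ) := by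
      funext q; simp
    have e2 : (fun q => ![(1:ℝ),0,-α q,-β q,M q] 1) = fun _ => (0:ℝ) := by
      funext q; simp
    rw [e1, e2, fderiv_fun_const, fderiv_fun_const]
    simp
  · have e1 : (fun q => ![(0:ℝ),1,-γ q,-δ q,N q] 2) = fun q => -γ q := by
      funext q; simp
    have e2 : (fun q => ![(1:ℝ),0,-α q,-β q,M q] 2) = fun q => -α q := by
      funext q; simp
    rw [e1, e2, key γ hγ, key α hα]
    simp only [Fin.sum_univ_five, Matrix.cons_val_zero, Matrix.cons_val_one, Matrix.head_cons,
      Matrix.cons_val_two, Matrix.tail_cons, Matrix.cons_val_three, Matrix.cons_val_four]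
    ring
  · have e1 : (fun q => ![(0:ℝ),1,-γ q,-δ q,N q] 3) = fun q => -δ q := by
      funext q; simp
    have e2 : (fun q => ![(1:ℝ),0,-α q,-β q,M q] 3) = fun q => -β q := by
      funext q; simp
    rw [e1, e2, key δ hδ, key β hβ]
    simp only [Fin.sum_univ_five, Matrix.cons_val_zero, Matrix.cons_val_one, Matrix.head_cons,
      Matrix.cons_val_two, Matrix.tail_cons, Matrix.cons_val_three, Matrix.cons_val_four]
    ring

/-- Existence and uniqueness of the normal lift in 4D: with
`X = ∂_x − α∂_z − β∂_t`, `Y = ∂_y − γ∂_z − δ∂_t` and nondegeneracy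
`α'δ' − β'γ' ≠ 0` (primes denoting `∂_λ`), the vertical components
`(m,n)ᵀ = A⁻¹(R₁,R₂)ᵀ`, with `A` the matrix with rows `(δ',−β')`, `(−γ',α')` and
`R₁ = αδ_z + βδ_t − γβ_z − δβ_t + β_y − δ_x`,
`R₂ = γα_z + δα_t − αγ_z − βγ_t + γ_x − α_y`,
give lifts `X̂ = X + m∂_λ`, `Ŷ = Y + n∂_λ` whose bracket `[X̂,Ŷ]` is proportional to
`∂_λ` (its `dx`, `dy`, `dz`, `dt` components vanish), and `(m,n)` is the unique pair of
functions with this property. -/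
theorem stmt16 (α β γ δ m n : (Fin 5 → ℝ) → ℝ)
    (hα : ContDiff ℝ (⊤ : ℕ∞) α) (hβ : ContDiff ℝ (⊤ : ℕ∞) β) (hγ : ContDiff ℝ (⊤ : ℕ∞) γ) (hδ : ContDiff ℝ (⊤ : ℕ∞) δ)
    (hdet : ∀ p, pd 4 α p * pd 4 δ p - pd 4 β p * pd 4 γ p ≠ 0)
    (R₁ R₂ : (Fin 5 → ℝ) → ℝ)
    (hR₁ : ∀ p, R₁ p = α p * pd 2 δ p + β p * pd 3 δ p - γ p * pd 2 β p - δ p * pd 3 β p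
      + pd 1 β p - pd 0 δ p)
    (hR₂ : ∀ p, R₂ p = γ p * pd 2 α p + δ p * pd 3 α p - α p * pd 2 γ p - β p * pd 3 γ p
      + pd 0 γ p - pd 1 α p)
    (hm : ∀ p, m p = (pd 4 α p * R₁ p + pd 4 β p * R₂ p)
      / (pd 4 α p * pd 4 δ p - pd 4 β p * pd 4 γ p))
    (hn : ∀ p, n p = (pd 4 γ p * R₁ p + pd 4 δ p * R₂ p)
      / (pd 4 α p * pd 4 δ p - pd 4 β p * pd 4 γ p)) :
    (∀ p, lie (fun q => ![1, 0, -α q, -β q, m q]) (fun q => ![0, 1, -γ q, -δ q, n q]) p 0 = 0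
        ∧ lie (fun q => ![1, 0, -α q, -β q, m q]) (fun q => ![0, 1, -γ q, -δ q, n q]) p 1 = 0
        ∧ lie (fun q => ![1, 0, -α q, -β q, m q]) (fun q => ![0, 1, -γ q, -δ q, n q]) p 2 = 0
        ∧ lie (fun q => ![1, 0, -α q, -β q, m q]) (fun q => ![0, 1, -γ q, -δ q, n q]) p 3 = 0)
    ∧ (∀ m' n' : (Fin 5 → ℝ) → ℝ, ContDiff ℝ (⊤ : ℕ∞) m' → ContDiff ℝ (⊤ : ℕ∞) n' →
        (∀ p, lie (fun q => ![1, 0, -α q, -β q, m' q]) (fun q => ![0, 1, -γ q, -δ q, n' q]) p 2 = 0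
            ∧ lie (fun q => ![1, 0, -α q, -β q, m' q]) (fun q => ![0, 1, -γ q, -δ q, n' q]) p 3 = 0) →
        m' = m ∧ n' = n) := by
  have dα := hα.differentiable (by simp)
  have dβ := hβ.differentiable (by simp)
  have dγ := hγ.differentiable (by simp)
  have dδ := hδ.differentiable (by simp)
  -- smoothness of R₁, R₂, m, n
  have hpα2 := pd_contDiff hα 2; have hpα3 := pd_contDiff hα 3
  have hpα4 := pd_contDiff hα 4
  have hpβ2 := pd_contDiff hβ 2; have hpβ3 := pd_contDiff hβ 3
  have hpβ4 := pd_contDiff hβ 4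
  have hpγ2 := pd_contDiff hγ 2; have hpγ3 := pd_contDiff hγ 3
  have hpγ4 := pd_contDiff hγ 4
  have hpδ2 := pd_contDiff hδ 2; have hpδ3 := pd_contDiff hδ 3
  have hpδ4 := pd_contDiff hδ 4
  have hpα0 := pd_contDiff hα 0; have hpα1 := pd_contDiff hα 1
  have hpβ0 := pd_contDiff hβ 0; have hpβ1 := pd_contDiff hβ 1
  have hpγ0 := pd_contDiff hγ 0; have hpγ1 := pd_contDiff hγ 1
  have hpδ0 := pd_contDiff hδ 0; have hpδ1 := pd_contDiff hδ 1
  have hR₁C : ContDiff ℝ (⊤ : ℕ∞) R₁ := by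
    have : R₁ = fun p => α p * pd 2 δ p + β p * pd 3 δ p - γ p * pd 2 β p - δ p * pd 3 β p
      + pd 1 β p - pd 0 δ p := funext hR₁
    rw [this]; fun_prop
  have hR₂C : ContDiff ℝ (⊤ : ℕ∞) R₂ := by
    have : R₂ = fun p => γ p * pd 2 α p + δ p * pd 3 α p - α p * pd 2 γ p - β p * pd 3 γ p
      + pd 0 γ p - pd 1 α p := funext hR₂
    rw [this]; fun_prop
  have hmC : ContDiff ℝ (⊤ : ℕ∞) m := by
    have : m = fun p => (pd 4 α p * R₁ p + pd 4 β p * R₂ p)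
      / (pd 4 α p * pd 4 δ p - pd 4 β p * pd 4 γ p) := funext hm
    rw [this]
    exact ContDiff.div (by fun_prop) (by fun_prop) hdet
  have hnC : ContDiff ℝ (⊤ : ℕ∞) n := by
    have : n = fun p => (pd 4 γ p * R₁ p + pd 4 δ p * R₂ p)
      / (pd 4 α p * pd 4 δ p - pd 4 β p * pd 4 γ p) := funext hn
    rw [this]
    exact ContDiff.div (by fun_prop) (by fun_prop) hdet
  have dm := hmC.differentiable (by simp)
  have dn := hnC.differentiable (by simp)
  constructor
  · intro p
    obtain ⟨H0, H1, H2, H3⟩ := lie_comp α β γ δ m n dα dβ dγ dδ dm dn p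
    have em := hm p
    have en := hn p
    rw [eq_div_iff (hdet p)] at em en
    refine ⟨H0, H1, ?_, ?_⟩
    · rw [H2]
      refine mul_right_cancel₀ (hdet p) ?_
      linear_combination (pd 4 α p) * en - (pd 4 γ p) * em
        + (pd 4 α p * pd 4 δ p - pd 4 β p * pd 4 γ p) * hR₂ p
    · rw [H3]
      refine mul_right_cancel₀ (hdet p) ?_
      linear_combination (pd 4 β p) * en - (pd 4 δ p) * em
        - (pd 4 α p * pd 4 δ p - pd 4 β p * pd 4 γ p) * hR₁ p
  · intro m' n' hm'C hn'C h
    have dm' := hm'C.differentiable (by simp)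
    have dn' := hn'C.differentiable (by simp)
    have key : ∀ p, m' p = m p ∧ n' p = n p := by
      intro p
      obtain ⟨_, _, H2, H3⟩ := lie_comp α β γ δ m' n' dα dβ dγ dδ dm' dn' p
      have e2 := (h p).1
      have e3 := (h p).2
      rw [H2] at e2
      rw [H3] at e3
      constructor
      · rw [hm p, hR₁ p, hR₂ p, eq_div_iff (hdet p)]
        linear_combination (-(pd 4 α p)) * e3 + (pd 4 β p) * e2
      · rw [hn p, hR₁ p, hR₂ p, eq_div_iff (hdet p)]
        linear_combination (-(pd 4 γ p)) * e3 + (pd 4 δ p) * e2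
    exact ⟨funext fun p => (key p).1, funext fun p => (key p).2⟩
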